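/- arXiv:2605.20858 — 3 statements merged into one kernel-verified Lean document; each statement's English description precedes it below -/
import Mathlib

section
/- Let R → A' be a ring map of finite type and A' → A an integral ring map (so R → A is 'ift'), and let R → R' be an integral ring map followed by a finite type map R' → B. Then the composite R → B of an integral map and a finite type map factors as a finite type map followed by an integral map; consequently, compositions of ift maps are ift. -/
/-!
STATEMENT 2: A ring map `R → A` is *ift* (integral over finite type) if it factors as
`R → A' → A` with `R → A'` of finite type and `A' → A` integral.  Equivalently,
there is a finite subset `s ⊆ A` such that `A` is integral over the subring generated
by the image of `R` and `s`.

The theorem: (a) if `R → R'` is integral and `R' → B` is of finite type, then the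
composite `R → B` factors as a finite type map followed by an integral map (i.e. it is
ift); consequently (b) compositions of ift ring maps are ift.
-/

universe u

/-- A ring map is *ift* (integral over finite type): it factors as a finite type map
followed by an integral map; equivalently, the target is integral over a finitely
generated (over the image of the source) subring. -/
def IsIft {R A : Type u} [CommRing R] [CommRing A] (f : R →+* A) : Prop :=
  ∃ s : Finset A, ∀ x : A,
    (Subring.closure ((Set.range f) ∪ (s : Set A))).subtype.IsIntegralElem x

lemma subtype_comp_inclusion {B : Type*} [CommRing B] {S C : Subring B} (h : S ≤ C) :
    C.subtype.comp (Subring.inclusion h) = S.subtype := RingHom.ext fun _ => rfl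

lemma subtype_apply' {B : Type*} [CommRing B] (S : Subring B) (c : S) :
    S.subtype c = c.1 := rfl

lemma subtype_comp_codRestrict {R B : Type*} [CommRing R] [CommRing B] (f : R →+* B)
    (S : Subring B) (h : ∀ x, f x ∈ S) : S.subtype.comp (f.codRestrict S h) = f :=
  RingHom.ext fun _ => rfl

/-- Transport integrality across a commuting square of ring maps. -/
lemma isIntegralElem_of_comp_eq {R R' B B' : Type*} [CommRing R] [CommRing R']
    [CommRing B] [CommRing B'] (f : R →+* B) (f' : R' →+* B') (φ : R →+* R')
    (ψ : B →+* B') (hcomp : f'.comp φ = ψ.comp f) {x : B}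
    (hx : f.IsIntegralElem x) : f'.IsIntegralElem (ψ x) := by
  obtain ⟨p, hp, hp0⟩ := hx
  refine ⟨p.map φ, hp.map φ, ?_⟩
  rw [Polynomial.eval₂_map, hcomp, ← Polynomial.hom_eval₂, hp0, map_zero]

/-- An element of a subring is trivially integral over it. -/
lemma isIntegralElem_of_mem {B : Type*} [CommRing B] (S : Subring B) {x : B}
    (hx : x ∈ S) : S.subtype.IsIntegralElem x :=
  show S.subtype.IsIntegralElem (S.subtype ⟨x, hx⟩) from S.subtype.isIntegralElem_map

/-- Integrality over a subring is monotone in the subring. -/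
lemma isIntegralElem_mono {B : Type*} [CommRing B] {S₁ S₂ : Subring B} (h : S₁ ≤ S₂)
    {x : B} (hx : S₁.subtype.IsIntegralElem x) : S₂.subtype.IsIntegralElem x := by
  have := isIntegralElem_of_comp_eq S₁.subtype S₂.subtype (Subring.inclusion h)
    (RingHom.id B) (by rw [subtype_comp_inclusion, RingHom.id_comp]) hx
  simpa using this

/-- Key lemma: if every element of `T` is integral over
`S = closure (range f ∪ u)` and every element of `B` is integral over
`closure (range f ∪ T ∪ u)`, then every element of `B` is integral over `S`. -/
lemma key_ift {R B : Type u} [CommRing R] [CommRing B] (f : R →+* B) (u : Finset B)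
    (T : Set B)
    (hT : ∀ x ∈ T, (Subring.closure (Set.range f ∪ (u : Set B))).subtype.IsIntegralElem x)
    (htop : ∀ x : B,
      (Subring.closure (Set.range f ∪ T ∪ (u : Set B))).subtype.IsIntegralElem x) :
    ∀ x : B, (Subring.closure (Set.range f ∪ (u : Set B))).subtype.IsIntegralElem x := by
  let S : Subring B := Subring.closure (Set.range f ∪ (u : Set B))
  let C : Subring B := Subring.closure (Set.range f ∪ T ∪ (u : Set B))
  -- every element of C (seen in B) is integral over S
  have hCS : ∀ x ∈ C, S.subtype.IsIntegralElem x := by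
    apply IsIntegral.of_mem_closure''
    rintro x ((⟨r, rfl⟩ | hyT) | hxu)
    · exact isIntegralElem_of_mem S (Subring.subset_closure (Or.inl ⟨r, rfl⟩))
    · exact hT _ hyT
    · exact isIntegralElem_of_mem S (Subring.subset_closure (Or.inr hxu))
  have hSC : S ≤ C := by
    apply Subring.closure_mono
    rintro x (hx | hx)
    · exact Or.inl (Or.inl hx)
    · exact Or.inr hx
  have heq : C.subtype.comp (Subring.inclusion hSC) = S.subtype :=
    subtype_comp_inclusion hSC
  -- the inclusion S → C is integral
  have hι : (Subring.inclusion hSC).IsIntegral := by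
    intro c
    obtain ⟨p, hp, hp0⟩ := hCS c.1 c.2
    refine ⟨p, hp, Subtype.ext ?_⟩
    calc (C.subtype) (Polynomial.eval₂ (Subring.inclusion hSC) c p)
        = Polynomial.eval₂ (C.subtype.comp (Subring.inclusion hSC)) (C.subtype c) p :=
          Polynomial.hom_eval₂ p (Subring.inclusion hSC) C.subtype c
      _ = Polynomial.eval₂ S.subtype c.1 p := by rw [heq, subtype_apply']
      _ = 0 := hp0
  have htrans := RingHom.IsIntegral.trans (Subring.inclusion hSC) C.subtype hι htop
  intro x
  have h := htrans x
  rwa [heq] at h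

theorem integral_comp_finiteType_isIft_and_isIft_comp :
    (∀ (R R' B : Type u) [CommRing R] [CommRing R'] [CommRing B]
      (f : R →+* R') (g : R' →+* B),
        f.IsIntegral → g.FiniteType → IsIft (g.comp f)) ∧
    (∀ (R A B : Type u) [CommRing R] [CommRing A] [CommRing B]
      (f : R →+* A) (g : A →+* B),
        IsIft f → IsIft g → IsIft (g.comp f)) := by
  constructor
  · -- part (a)
    intro R R' B _ _ _ f g hf hg
    letI : Algebra R' B := g.toAlgebra
    obtain ⟨s, hs⟩ := hg.out
    refine ⟨s, ?_⟩
    apply key_ift (g.comp f) s (Set.range g)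
    · -- every g r' is integral over S
      rintro _ ⟨r', rfl⟩
      have hmem : ∀ r : R, (g.comp f) r ∈
          Subring.closure (Set.range (g.comp f) ∪ (s : Set B)) := fun r =>
        Subring.subset_closure (Or.inl ⟨r, rfl⟩)
      exact isIntegralElem_of_comp_eq f
        (Subring.closure (Set.range (g.comp f) ∪ (s : Set B))).subtype
        ((g.comp f).codRestrict _ hmem) g (subtype_comp_codRestrict _ _ hmem) (hf r')
    · -- B is generated by range (g∘f) ∪ range g ∪ s
      intro x
      have h1 : Subring.closure (Set.range g ∪ (s : Set B)) = ⊤ := by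
        have h := Algebra.adjoin_eq_ring_closure (R := R') (s : Set B)
        rw [hs] at h
        have h2 : Set.range (algebraMap R' B) = Set.range g := rfl
        rw [h2] at h
        rw [← h]; rfl
      have hle : Subring.closure (Set.range g ∪ (s : Set B)) ≤
          Subring.closure (Set.range (g.comp f) ∪ Set.range g ∪ (s : Set B)) := by
        apply Subring.closure_mono
        rintro y (hy | hy)
        · exact Or.inl (Or.inr hy)
        · exact Or.inr hy
      exact isIntegralElem_of_mem _ (hle (h1 ▸ Subring.mem_top x))
  · -- part (b)
    intro R A B _ _ _ f g hf hg
    classical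
    obtain ⟨s, hsA⟩ := hf
    obtain ⟨t, htB⟩ := hg
    refine ⟨s.image g ∪ t, ?_⟩
    -- g maps closure (range f ∪ s) into the target closure
    have hmap : ∀ z : Subring.closure (Set.range f ∪ (s : Set A)), g z.1 ∈
        Subring.closure (Set.range (g.comp f) ∪ ((s.image g ∪ t : Finset B) : Set B)) := by
      intro z
      have hz : g z.1 ∈ (Subring.closure (Set.range f ∪ (s : Set A))).map g :=
        ⟨z.1, z.2, rfl⟩
      rw [RingHom.map_closure] at hz
      refine Subring.closure_mono ?_ hz
      rintro y ⟨w, hw | hw, rfl⟩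
      · obtain ⟨r, rfl⟩ := hw
        exact Or.inl ⟨r, rfl⟩
      · refine Or.inr ?_
        simp only [Finset.coe_union, Finset.coe_image, Set.mem_union]
        exact Or.inl ⟨w, hw, rfl⟩
    apply key_ift (g.comp f) (s.image g ∪ t) (Set.range g)
    · -- every g a is integral over the target closure
      rintro _ ⟨a, rfl⟩
      exact isIntegralElem_of_comp_eq
        (Subring.closure (Set.range f ∪ (s : Set A))).subtype
        (Subring.closure (Set.range (g.comp f) ∪
          ((s.image g ∪ t : Finset B) : Set B))).subtype
        ((g.comp (Subring.closure (Set.range f ∪ (s : Set A))).subtype).codRestrict _ hmap)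
        g (subtype_comp_codRestrict _ _ hmap) (hsA a)
    · -- every x in B is integral over the big closure
      intro x
      have hle : Subring.closure (Set.range g ∪ (t : Set B)) ≤
          Subring.closure (Set.range (g.comp f) ∪ Set.range g ∪
            ((s.image g ∪ t : Finset B) : Set B)) := by
        apply Subring.closure_mono
        rintro y (hy | hy)
        · exact Or.inl (Or.inr hy)
        · refine Or.inr ?_
          simp only [Finset.coe_union, Set.mem_union]
          exact Or.inr hy
      exact isIntegralElem_mono hle (htB x)
end

section
/- Let φ: (R,R̃) → (A,Ã) be a compatible pair of ring maps with R → A of finite presentation and R̃ → Ã ift. Let {(B_i, B̃_i)}_{i∈I} be a filtered system of pairs of rings with each B̃_i integrally closed in B_i, with compatible maps from (R,R̃), and let (B,B̃) = colim (B_i, B̃_i). Then any compatible pair of maps (h,h̃): (A,Ã) → (B,B̃) over (R,R̃) factors, for some index i, through a compatible pair of maps (h_i, h̃_i): (A,Ã) → (B_i, B̃_i). -/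
/-!
STATEMENT 4: Let `φ : (R,R̃) → (A,Ã)` be a compatible pair of ring maps with `R → A`
of finite presentation and `R̃ → Ã` ift.  Let `{(B_i, B̃_i)}_{i ∈ I}` be a filtered
system of pairs of rings with each `B̃_i` integrally closed in `B_i`, with compatible
maps from `(R,R̃)`, and let `(B,B̃) = colim (B_i, B̃_i)`.  Then any compatible pair of
maps `(h,h̃) : (A,Ã) → (B,B̃)` over `(R,R̃)` factors, for some index `i`, through a
compatible pair of maps `(h_i, h̃_i) : (A,Ã) → (B_i, B̃_i)`.

A pair of rings `(B, B̃)` is encoded by a ring map `ψ : B̃ → B`; the colimit is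
encoded by compatible maps `e_i : B_i → B` which are jointly surjective and with
equality detected at a finite stage.
-/

universe u

theorem pair_map_factors_through_finite_stage
    {R Rt A At : Type u} [CommRing R] [CommRing Rt] [CommRing A] [CommRing At]
    -- the pairs `(R, R̃)` and `(A, Ã)`
    (φR : Rt →+* R) (φA : At →+* A)
    -- the pair map `(f, f̃) : (R,R̃) → (A,Ã)`, with `f` of finite presentation and `f̃` ift
    (f : R →+* A) (ft : Rt →+* At) (hsq : f.comp φR = φA.comp ft)
    (hf : f.FinitePresentation) (hft : IsIft ft)
    -- the filtered system of pairs `(B_i, B̃_i)`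
    {ι : Type u} [Preorder ι] [IsDirected ι (· ≤ ·)] [Nonempty ι]
    (B Bt : ι → Type u) [∀ i, CommRing (B i)] [∀ i, CommRing (Bt i)]
    (ψ : ∀ i, Bt i →+* B i)
    (tB : ∀ {i j : ι}, i ≤ j → (B i →+* B j))
    (tBt : ∀ {i j : ι}, i ≤ j → (Bt i →+* Bt j))
    (htB_id : ∀ i, tB (le_refl i) = RingHom.id (B i))
    (htB_comp : ∀ {i j k : ι} (hij : i ≤ j) (hjk : j ≤ k),
      (tB hjk).comp (tB hij) = tB (hij.trans hjk))
    (htBt_id : ∀ i, tBt (le_refl i) = RingHom.id (Bt i))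
    (htBt_comp : ∀ {i j k : ι} (hij : i ≤ j) (hjk : j ≤ k),
      (tBt hjk).comp (tBt hij) = tBt (hij.trans hjk))
    (hψ : ∀ {i j : ι} (h : i ≤ j), (ψ j).comp (tBt h) = (tB h).comp (ψ i))
    -- each `B̃_i` is integrally closed in `B_i`
    (hint : ∀ i, Function.Injective (ψ i) ∧
      ∀ x : B i, (ψ i).IsIntegralElem x → x ∈ Set.range (ψ i))
    -- the compatible system of pair maps `(g_i, g̃_i) : (R,R̃) → (B_i, B̃_i)`
    (g : ∀ i, R →+* B i) (gt : ∀ i, Rt →+* Bt i)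
    (hg : ∀ {i j : ι} (h : i ≤ j), (tB h).comp (g i) = g j)
    (hgt : ∀ {i j : ι} (h : i ≤ j), (tBt h).comp (gt i) = gt j)
    (hgsq : ∀ i, (g i).comp φR = (ψ i).comp (gt i))
    -- the colimit pair `(B, B̃)`
    {Bc Btc : Type u} [CommRing Bc] [CommRing Btc] (ψc : Btc →+* Bc)
    (e : ∀ i, B i →+* Bc) (et : ∀ i, Bt i →+* Btc)
    (he : ∀ {i j : ι} (h : i ≤ j), (e j).comp (tB h) = e i)
    (het : ∀ {i j : ι} (h : i ≤ j), (et j).comp (tBt h) = et i)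
    (heψ : ∀ i, ψc.comp (et i) = (e i).comp (ψ i))
    (hsurj : ∀ b : Bc, ∃ i x, e i x = b)
    (htsurj : ∀ b : Btc, ∃ i x, et i x = b)
    (hinj : ∀ i x y, e i x = e i y → ∃ j, ∃ h : i ≤ j, tB h x = tB h y)
    (htinj : ∀ i x y, et i x = et i y → ∃ j, ∃ h : i ≤ j, tBt h x = tBt h y)
    -- a compatible pair of maps `(h, h̃) : (A, Ã) → (B, B̃)` over `(R, R̃)`
    (h : A →+* Bc) (ht : At →+* Btc)
    (hcompat : ∀ i, h.comp f = (e i).comp (g i))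
    (htcompat : ∀ i, ht.comp ft = (et i).comp (gt i))
    (hhsq : h.comp φA = ψc.comp ht) :
    -- conclusion: `(h, h̃)` factors through `(B_i, B̃_i)` for some `i`
    ∃ (i : ι) (hi : A →+* B i) (hti : At →+* Bt i),
      (e i).comp hi = h ∧ (et i).comp hti = ht ∧
      hi.comp f = g i ∧ hti.comp ft = gt i ∧
      (ψ i).comp hti = hi.comp φA := by
  classical
  -- pointwise versions of compatibilities
  have heP : ∀ {i j : ι} (hij : i ≤ j) (x : B i), e j (tB hij x) = e i x := by
    intro i j hij x; exact RingHom.congr_fun (he hij) x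
  have hetP : ∀ {i j : ι} (hij : i ≤ j) (x : Bt i), et j (tBt hij x) = et i x := by
    intro i j hij x; exact RingHom.congr_fun (het hij) x
  have hψP : ∀ {i j : ι} (hij : i ≤ j) (x : Bt i), ψ j (tBt hij x) = tB hij (ψ i x) := by
    intro i j hij x; exact RingHom.congr_fun (hψ hij) x
  have heψP : ∀ (i : ι) (x : Bt i), ψc (et i x) = e i (ψ i x) := by
    intro i x; exact RingHom.congr_fun (heψ i) x
  -- Step 0 : ψc is injective
  have hψcinj : Function.Injective ψc := by
    intro u v huv
    obtain ⟨a, p, hp⟩ := htsurj u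
    obtain ⟨b, q, hq⟩ := htsurj v
    obtain ⟨c, hac, hbc⟩ := directed_of (· ≤ ·) a b
    have hu : et c (tBt hac p) = u := by rw [hetP hac p, hp]
    have hv : et c (tBt hbc q) = v := by rw [hetP hbc q, hq]
    have : e c (ψ c (tBt hac p)) = e c (ψ c (tBt hbc q)) := by
      rw [← heψP, ← heψP, hu, hv, huv]
    obtain ⟨d, hcd, hd⟩ := hinj c _ _ this
    have : ψ d (tBt hcd (tBt hac p)) = ψ d (tBt hcd (tBt hbc q)) := by
      rw [hψP hcd, hψP hcd]; exact hd
    have heq := (hint d).1 this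
    calc u = et d (tBt hcd (tBt hac p)) := by rw [hetP, hu]
      _ = et d (tBt hcd (tBt hbc q)) := by rw [heq]
      _ = v := by rw [hetP, hv]
  -- Step 1 : descend h to a finite stage, using finite presentation of f
  letI : Algebra R A := f.toAlgebra
  have halg : algebraMap R A = f := rfl
  obtain ⟨n, π, hπ, hker⟩ := hf.out
  obtain ⟨t, hts⟩ := hker
  choose idx val hval using fun l : Fin n => hsurj (h (π (MvPolynomial.X l)))
  obtain ⟨i0, hub0⟩ := (Finset.univ.image idx).exists_le
  have hidx : ∀ l, idx l ≤ i0 := fun l =>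
    hub0 _ (Finset.mem_image_of_mem idx (Finset.mem_univ l))
  set α : MvPolynomial (Fin n) R →+* B i0 :=
    MvPolynomial.eval₂Hom (g i0) (fun l => tB (hidx l) (val l)) with hα
  have heα : (e i0).comp α = h.comp π.toRingHom := by
    apply MvPolynomial.ringHom_ext
    · intro r
      have h1 : π.toRingHom (MvPolynomial.C r) = f r := by
        have := π.commutes r
        simpa [MvPolynomial.algebraMap_eq, halg] using this
      simp only [RingHom.comp_apply, hα, MvPolynomial.eval₂Hom_C, h1]
      exact (RingHom.congr_fun (hcompat i0) r).symm
    · intro l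
      simp only [RingHom.comp_apply, hα, MvPolynomial.eval₂Hom_X']
      rw [heP (hidx l) (val l), hval l]
      rfl
  have heαP : ∀ p, e i0 (α p) = h (π p) := fun p => RingHom.congr_fun heα p
  -- kill the finitely many relations at a later stage
  have hrel : ∀ p : {p // p ∈ t}, e i0 (α p.1) = e i0 0 := by
    rintro ⟨p, hp⟩
    have hpker : π.toRingHom p = 0 := by
      have : p ∈ RingHom.ker π.toRingHom := by
        rw [← hts]; exact Ideal.subset_span hp
      simpa [RingHom.mem_ker] using this
    rw [heαP]
    show h (π.toRingHom p) = e i0 0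
    rw [hpker, map_zero, map_zero]
  choose jp hjp hjz using fun p : {p // p ∈ t} => hinj i0 (α p.1) 0 (hrel p)
  obtain ⟨i1, hub1⟩ := (insert i0 (t.attach.image jp)).exists_le
  have h01 : i0 ≤ i1 := hub1 _ (Finset.mem_insert_self _ _)
  have hjp1 : ∀ p : {p // p ∈ t}, jp p ≤ i1 := fun p =>
    hub1 _ (Finset.mem_insert_of_mem (Finset.mem_image_of_mem jp (Finset.mem_attach t p)))
  set β : MvPolynomial (Fin n) R →+* B i1 := (tB h01).comp α with hβ
  have hβker : RingHom.ker π.toRingHom ≤ RingHom.ker β := by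
    rw [← hts, Ideal.span_le]
    intro p hp
    have hz : tB (hjp ⟨p, hp⟩) (α p) = 0 := by
      have := hjz ⟨p, hp⟩; rwa [map_zero] at this
    have hcompz := RingHom.congr_fun (htB_comp (hjp ⟨p, hp⟩) (hjp1 ⟨p, hp⟩)) (α p)
    simp only [RingHom.comp_apply] at hcompz
    have : tB ((hjp ⟨p, hp⟩).trans (hjp1 ⟨p, hp⟩)) (α p) = 0 := by
      rw [← hcompz, hz, map_zero]
    rw [SetLike.mem_coe, RingHom.mem_ker]
    exact this
  set hA1 : A →+* B i1 :=
    π.toRingHom.liftOfRightInverse (Function.surjInv hπ)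
      (Function.rightInverse_surjInv hπ) ⟨β, hβker⟩ with hA1def
  have hA1π : ∀ p, hA1 (π p) = β p := fun p =>
    π.toRingHom.liftOfRightInverse_comp_apply _ _ ⟨β, hβker⟩ p
  have hA1e : (e i1).comp hA1 = h := by
    ext a
    obtain ⟨p, rfl⟩ := hπ a
    rw [RingHom.comp_apply]
    show e i1 (hA1 (π p)) = h (π p)
    rw [hA1π, hβ, RingHom.comp_apply, heP h01, heαP]
  have hA1f : hA1.comp f = g i1 := by
    ext r
    have h1 : π (MvPolynomial.C r) = f r := by
      have := π.commutes r
      simpa [MvPolynomial.algebraMap_eq, halg] using this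
    rw [RingHom.comp_apply, ← h1]
    show hA1 (π (MvPolynomial.C r)) = g i1 r
    rw [hA1π, hβ, RingHom.comp_apply, hα, MvPolynomial.eval₂Hom_C]
    exact RingHom.congr_fun (hg h01) r
  -- Step 2 : lift the images under ht of the ift generating set
  obtain ⟨s, hs⟩ := hft
  choose k c hc using fun x : {x // x ∈ s} => htsurj (ht x.1)
  obtain ⟨i2, hub2⟩ := (insert i1 (s.attach.image k)).exists_le
  have h12 : i1 ≤ i2 := hub2 _ (Finset.mem_insert_self _ _)
  have hk2 : ∀ x : {x // x ∈ s}, k x ≤ i2 := fun x =>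
    hub2 _ (Finset.mem_insert_of_mem (Finset.mem_image_of_mem k (Finset.mem_attach s x)))
  set hA2 : A →+* B i2 := (tB h12).comp hA1 with hA2def
  have hA2e : ∀ a, e i2 (hA2 a) = h a := by
    intro a
    rw [hA2def, RingHom.comp_apply, heP h12]
    exact RingHom.congr_fun hA1e a
  set c2 : {x // x ∈ s} → Bt i2 := fun x => tBt (hk2 x) (c x) with hc2
  have hc2e : ∀ x : {x // x ∈ s}, et i2 (c2 x) = ht x.1 := by
    intro x; rw [hc2]; rw [hetP (hk2 x), hc x]
  -- Step 3 : at a later stage the image of the generating set lands in range ψ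
  have hstep3 : ∀ x : {x // x ∈ s}, e i2 (hA2 (φA x.1)) = e i2 (ψ i2 (c2 x)) := by
    intro x
    rw [hA2e, ← heψP, hc2e]
    exact RingHom.congr_fun hhsq x.1
  choose j3 hj3 hj3eq using fun x : {x // x ∈ s} =>
    hinj i2 (hA2 (φA x.1)) (ψ i2 (c2 x)) (hstep3 x)
  obtain ⟨i3, hub3⟩ := (insert i2 (s.attach.image j3)).exists_le
  have h23 : i2 ≤ i3 := hub3 _ (Finset.mem_insert_self _ _)
  have hj33 : ∀ x : {x // x ∈ s}, j3 x ≤ i3 := fun x =>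
    hub3 _ (Finset.mem_insert_of_mem (Finset.mem_image_of_mem j3 (Finset.mem_attach s x)))
  set hA3 : A →+* B i3 := (tB h23).comp hA2 with hA3def
  have hA3e : ∀ a, e i3 (hA3 a) = h a := by
    intro a
    rw [hA3def, RingHom.comp_apply, heP h23]
    exact hA2e a
  have hA3f : hA3.comp f = g i3 := by
    ext r
    rw [RingHom.comp_apply, hA3def, RingHom.comp_apply, hA2def, RingHom.comp_apply]
    have h1 : hA1 (f r) = g i1 r := RingHom.congr_fun hA1f r
    rw [h1]
    have h2 : tB h12 (g i1 r) = g i2 r := RingHom.congr_fun (hg h12) r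
    rw [h2]
    exact RingHom.congr_fun (hg h23) r
  set c3 : {x // x ∈ s} → Bt i3 := fun x => tBt h23 (c2 x) with hc3
  have hkey : ∀ x : {x // x ∈ s}, hA3 (φA x.1) = ψ i3 (c3 x) := by
    intro x
    have hcomp := RingHom.congr_fun (htB_comp (hj3 x) (hj33 x)) (hA2 (φA x.1))
    have hcomp' := RingHom.congr_fun (htB_comp (hj3 x) (hj33 x)) (ψ i2 (c2 x))
    simp only [RingHom.comp_apply] at hcomp hcomp'
    have : tB ((hj3 x).trans (hj33 x)) (hA2 (φA x.1))
        = tB ((hj3 x).trans (hj33 x)) (ψ i2 (c2 x)) := by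
      rw [← hcomp, ← hcomp', hj3eq x]
    calc hA3 (φA x.1) = tB h23 (hA2 (φA x.1)) := rfl
      _ = tB ((hj3 x).trans (hj33 x)) (hA2 (φA x.1)) := rfl
      _ = tB ((hj3 x).trans (hj33 x)) (ψ i2 (c2 x)) := this
      _ = tB h23 (ψ i2 (c2 x)) := rfl
      _ = ψ i3 (tBt h23 (c2 x)) := (hψP h23 (c2 x)).symm
      _ = ψ i3 (c3 x) := rfl
  have hc3e : ∀ x : {x // x ∈ s}, et i3 (c3 x) = ht x.1 := by
    intro x; rw [hc3]; rw [hetP h23, hc2e]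
  -- Step 4 : construct hti
  set θ : At →+* B i3 := hA3.comp φA with hθ
  set C0 : Subring At := Subring.closure ((Set.range ft) ∪ (s : Set At)) with hC0
  have hC0mem : ∀ y ∈ C0, θ y ∈ (ψ i3).range := by
    intro y hy
    induction hy using Subring.closure_induction with
    | mem z hz =>
      rcases hz with hz | hz
      · obtain ⟨r, rfl⟩ := hz
        have h1 : φA (ft r) = f (φR r) := (RingHom.congr_fun hsq r).symm
        have h2 : θ (ft r) = g i3 (φR r) := by
          rw [hθ, RingHom.comp_apply, h1]
          exact RingHom.congr_fun hA3f (φR r)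
        rw [h2]
        have h3 : g i3 (φR r) = ψ i3 (gt i3 r) := RingHom.congr_fun (hgsq i3) r
        exact ⟨gt i3 r, h3.symm⟩
      · exact ⟨c3 ⟨z, hz⟩, (hkey ⟨z, hz⟩).symm⟩
    | zero => rw [map_zero]; exact zero_mem _
    | one => rw [map_one]; exact one_mem _
    | add x y hx hy ihx ihy => rw [map_add]; exact add_mem ihx ihy
    | neg x hx ihx => rw [map_neg]; exact neg_mem ihx
    | mul x y hx hy ihx ihy => rw [map_mul]; exact mul_mem ihx ihy
  -- a ring hom from C0 to Bt i3
  have hψ3inj : Function.Injective (ψ i3) := (hint i3).1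
  have hLI : Function.LeftInverse (Function.invFun (ψ i3)) (ψ i3) :=
    Function.leftInverse_invFun hψ3inj
  set ρ : Bt i3 ≃+* (ψ i3).range := RingEquiv.ofLeftInverse hLI with hρ
  have hρap : ∀ y : Bt i3, (ρ y : B i3) = ψ i3 y := fun y =>
    RingEquiv.ofLeftInverse_apply hLI y
  have hψρ : ∀ y : (ψ i3).range, ψ i3 (ρ.symm y) = (y : B i3) := by
    intro y
    have h2 := hρap (ρ.symm y)
    rw [ρ.apply_symm_apply] at h2
    exact h2.symm
  set ρmap : C0 →+* Bt i3 :=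
    (ρ.symm : (ψ i3).range ≃+* Bt i3).toRingHom.comp
      (RingHom.codRestrict (θ.comp C0.subtype) (ψ i3).range
        (fun y => hC0mem y.1 y.2)) with hρmap
  have hψρmap : (ψ i3).comp ρmap = θ.comp C0.subtype := by
    ext y
    rw [RingHom.comp_apply, hρmap, RingHom.comp_apply]
    exact hψρ _
  -- every θ x is in range ψ i3
  have hmem : ∀ x : At, θ x ∈ (ψ i3).range := by
    intro x
    obtain ⟨p, hmonic, heval⟩ := hs x
    have hev : Polynomial.eval₂ (θ.comp C0.subtype) (θ x) p = 0 := by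
      have := Polynomial.hom_eval₂ (g := θ) (f := C0.subtype) (p := p) x
      rw [← this, heval, map_zero]
    have hint3 : (ψ i3).IsIntegralElem (θ x) := by
      refine ⟨p.map ρmap, hmonic.map ρmap, ?_⟩
      rw [Polynomial.eval₂_map, hψρmap, hev]
    obtain ⟨y, hy⟩ := (hint i3).2 (θ x) hint3
    exact ⟨y, hy⟩
  set hti : At →+* Bt i3 :=
    (ρ.symm : (ψ i3).range ≃+* Bt i3).toRingHom.comp
      (RingHom.codRestrict θ (ψ i3).range hmem) with htidef
  have hψhti : ∀ x : At, ψ i3 (hti x) = θ x := by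
    intro x
    rw [htidef, RingHom.comp_apply]
    exact hψρ _
  -- conclusion
  refine ⟨i3, hA3, hti, ?_, ?_, hA3f, ?_, ?_⟩
  · ext a; exact hA3e a
  · ext x
    apply hψcinj
    rw [RingHom.comp_apply, heψP, hψhti]
    have h1 : e i3 (θ x) = h (φA x) := hA3e (φA x)
    rw [h1]
    exact RingHom.congr_fun hhsq x
  · ext r
    apply hψ3inj
    show ψ i3 (hti (ft r)) = ψ i3 (gt i3 r)
    have h1 : φA (ft r) = f (φR r) := (RingHom.congr_fun hsq r).symm
    calc ψ i3 (hti (ft r)) = θ (ft r) := hψhti (ft r)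
      _ = hA3 (φA (ft r)) := rfl
      _ = hA3 (f (φR r)) := congrArg hA3 h1
      _ = g i3 (φR r) := RingHom.congr_fun hA3f (φR r)
      _ = ψ i3 (gt i3 r) := RingHom.congr_fun (hgsq i3) r
  · ext x
    show ψ i3 (hti x) = hA3 (φA x)
    exact hψhti x
end

section
/- Let à ⊆ A be rings with à integrally closed in A, and let x ∈ A \ Ã. Then there exist a prime ideal 𝔭 of A and a valuation v on K = Frac(A/𝔭) such that the composite à → A → K factors through the valuation ring O_v and v(x̄) < 0, where x̄ is the image of x in K. -/
/-!
In `A[1/x]` the element `1/x` is not a unit of `Ã[1/x]`: an inverse would put `x` in `Ã[1/x]`,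
and clearing denominators would make `x` integral over `Ã`. So `1/x` lies in a maximal ideal
`𝔪` of `Ã[1/x]`, and some prime `𝔮` of `A[1/x]` meets `Ã[1/x]` inside `𝔪` (since
`Ã[1/x] → A[1/x]` is injective, every minimal prime of `Ã[1/x]` is a contraction). Mapping to
`K = Frac(A/(𝔮 ∩ A))`, a valuation ring of `K` dominating the image of `Ã[1/x]` at `𝔪` contains
`Ã` and has `1/x̄` in its maximal ideal, so it does not contain `x̄`.
-/

universe u

/-- Data of a "place" of a commutative ring `A`: a field `K`, a ring homomorphism
`A → K` and a valuation subring of `K`. -/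
structure PlaceData (A : Type u) [CommRing A] : Type (u + 1) where
  K : Type u
  [fieldK : Field K]
  f : A →+* K
  O : ValuationSubring K

attribute [instance] PlaceData.fieldK

open Polynomial

lemma Ideal.exists_isPrime_comap_le_of_injective {R S : Type*} [CommRing R] [CommRing S]
    {f : R →+* S} (hf : Function.Injective f) (P : Ideal R) [P.IsPrime] :
    ∃ Q : Ideal S, Q.IsPrime ∧ Q.comap f ≤ P := by
  obtain ⟨p, hp, hpP⟩ := Ideal.exists_minimalPrimes_le (bot_le : ⊥ ≤ P)
  rw [← (RingHom.injective_iff_ker_eq_bot f).mp hf] at hp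
  obtain ⟨Q, hQ, rfl⟩ := Ideal.exists_minimalPrimes_comap_eq f p hp
  exact ⟨Q, hQ.1.1, hpP⟩

namespace IsLocalization.Away

variable {R S Sₓ : Type*} [CommRing R] [CommRing S] [CommRing Sₓ] [Algebra R S] [Algebra S Sₓ]
  [Algebra R Sₓ] [IsScalarTower R S Sₓ] {x : S} [IsLocalization.Away x Sₓ]

lemma isIntegral_of_isIntegral_algebraMap_self (hx : IsIntegral R (algebraMap S Sₓ x)) :
    IsIntegral R x := by
  obtain ⟨p, hpm, hp⟩ := hx
  rw [← aeval_def, aeval_algebraMap_apply,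
    IsLocalization.map_eq_zero_iff (Submonoid.powers x)] at hp
  obtain ⟨⟨_, k, rfl⟩, hk⟩ := hp
  refine ⟨X ^ k * p, (monic_X_pow k).mul hpm, ?_⟩
  rw [← aeval_def, map_mul, map_pow, aeval_X]
  exact hk

lemma isIntegral_of_span_invSelf_eq_top
    (h : Ideal.span {⟨invSelf (S := Sₓ) x, Algebra.self_mem_adjoin_singleton R _⟩} =
      (⊤ : Ideal (Algebra.adjoin R {invSelf (S := Sₓ) x}))) :
    IsIntegral R x := by
  rcases subsingleton_or_nontrivial R with _ | _
  · have := (algebraMap R S).codomain_trivial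
    exact Subsingleton.elim x 0 ▸ isIntegral_zero
  let _ : Invertible (invSelf (S := Sₓ) x) :=
    ⟨algebraMap S Sₓ x, mul_invSelf x, by rw [mul_comm, mul_invSelf]⟩
  obtain ⟨p, hp, hpx⟩ := Algebra.exists_aeval_invOf_eq_zero_of_idealMap_adjoin_sup_span_eq_top
    (invSelf (S := Sₓ) x) ⊥ bot_ne_top (top_unique (h.ge.trans le_sup_right))
  refine isIntegral_of_isIntegral_algebraMap_self (Sₓ := Sₓ) ⟨p, ?_, hpx⟩
  simpa [Monic, sub_eq_zero] using hp

end IsLocalization.Away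

lemma exists_valuationSubring_range_le_image_subset_nonunits {B K : Type*} [CommRing B] [Field K]
    (ρ : B →+* K) {m : Ideal B} (hm : m ≠ ⊤) (hker : RingHom.ker ρ ≤ m) :
    ∃ V : ValuationSubring K, ρ.range ≤ V.toSubring ∧ ρ '' m ⊆ V.nonunits := by
  have hmap : m.map ρ.rangeRestrict ≠ ⊤ := by
    intro h
    have hcomap := Ideal.comap_map_of_surjective' _ ρ.rangeRestrict_surjective m
    rw [h, Ideal.comap_top, RingHom.ker_rangeRestrict, sup_eq_left.mpr hker] at hcomap
    exact hm hcomap.symm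
  obtain ⟨V, hrange, hnonunits⟩ := Ideal.image_subset_nonunits_valuationSubring _ hmap
  exact ⟨V, hrange, fun _ ⟨b, hb, hρb⟩ => hnonunits ⟨_, Ideal.mem_map_of_mem _ hb, hρb⟩⟩

lemma IsFractionRing.exists_mul_algebraMap_eq_of_surjective {A R K : Type*} [CommRing A]
    [CommRing R] [Field K] [Algebra A R] [Algebra R K] [Algebra A K] [IsScalarTower A R K]
    [IsFractionRing R K] (hsurj : Function.Surjective (algebraMap A R)) (z : K) :
    ∃ a b : A, algebraMap A K b ≠ 0 ∧ z * algebraMap A K b = algebraMap A K a := by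
  obtain ⟨u, v, hv, rfl⟩ := IsFractionRing.div_surjective R z
  obtain ⟨a, rfl⟩ := hsurj u
  obtain ⟨b, rfl⟩ := hsurj v
  have hb : algebraMap A K b ≠ 0 := by
    rw [IsScalarTower.algebraMap_apply A R K]
    exact (IsLocalization.map_units K ⟨_, hv⟩).ne_zero
  refine ⟨a, b, hb, ?_⟩
  rw [← IsScalarTower.algebraMap_apply, ← IsScalarTower.algebraMap_apply, div_mul_cancel₀ _ hb]

lemma ker_algebraMap_fractionRing_quotient {A : Type*} [CommRing A] (P : Ideal A) [P.IsPrime] :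
    RingHom.ker (algebraMap A (FractionRing (A ⧸ P))) = P := by
  rw [IsScalarTower.algebraMap_eq A (A ⧸ P), Ideal.Quotient.algebraMap_eq,
    RingHom.ker_comp_of_injective _ (IsFractionRing.injective _ _), Ideal.mk_ker]

lemma IsLocalization.ker_lift_eq {A Aₘ K : Type*} [CommRing A] [CommRing Aₘ] [CommRing K]
    [Algebra A Aₘ] {M : Submonoid A} [IsLocalization M Aₘ] {g : A →+* K}
    (hg : ∀ s : M, IsUnit (g s)) {Q : Ideal Aₘ} (hQ : RingHom.ker g = Q.under A) :
    RingHom.ker (IsLocalization.lift hg : Aₘ →+* K) = Q := by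
  have hcomp : (IsLocalization.lift hg : Aₘ →+* K).comp (algebraMap A Aₘ) = g :=
    IsLocalization.lift_comp hg
  calc RingHom.ker (IsLocalization.lift hg : Aₘ →+* K)
      = ((RingHom.ker (IsLocalization.lift hg : Aₘ →+* K)).under A).map (algebraMap A Aₘ) :=
        (IsLocalization.map_under M Aₘ _).symm
    _ = (Q.under A).map (algebraMap A Aₘ) := by rw [Ideal.under, RingHom.comap_ker, hcomp, hQ]
    _ = Q := IsLocalization.map_under M Aₘ Q

lemma IsLocalization.exists_lift_fractionRing_quotient_under {A Aₘ : Type*} [CommRing A]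
    [CommRing Aₘ] [Algebra A Aₘ] (M : Submonoid A) [IsLocalization M Aₘ] (Q : Ideal Aₘ)
    [Q.IsPrime] :
    ∃ ψ : Aₘ →+* FractionRing (A ⧸ Q.under A),
      RingHom.ker ψ = Q ∧ ψ.comp (algebraMap A Aₘ) = algebraMap A _ := by
  have hM : ∀ s : M, IsUnit (algebraMap A (FractionRing (A ⧸ Q.under A)) s) := by
    intro s
    refine Ne.isUnit fun hs => Ideal.IsPrime.ne_top ‹_› (Ideal.eq_top_of_isUnit_mem _ ?_
      (IsLocalization.map_units Aₘ s))
    rwa [← Ideal.mem_comap, ← Ideal.under, ← ker_algebraMap_fractionRing_quotient (Q.under A)]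
  exact ⟨IsLocalization.lift hM,
    IsLocalization.ker_lift_eq hM (ker_algebraMap_fractionRing_quotient _),
    IsLocalization.lift_comp hM⟩

theorem exists_valuation_negative_on_nonintegral
    {A : Type u} [CommRing A] (T : Subring A)
    -- `T` is integrally closed in `A`
    (hT : ∀ x : A, T.subtype.IsIntegralElem x → x ∈ T)
    (x : A) (hx : x ∉ T) :
    ∃ D : PlaceData A,
      -- the kernel of `A → K` is a prime ideal `𝔭`, and `K = Frac(A/𝔭)`
      (∃ 𝔭 : Ideal A, 𝔭 = RingHom.ker D.f ∧ 𝔭.IsPrime) ∧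
      (∀ z : D.K, ∃ a b : A, D.f b ≠ 0 ∧ z * D.f b = D.f a) ∧
      -- `Ã → A → K` factors through the valuation ring
      (∀ t : A, t ∈ T → D.f t ∈ D.O) ∧
      -- `v(x̄) < 0`
      D.f x ∉ D.O := by
  let Aₓ := Localization.Away x
  let y : Aₓ := IsLocalization.Away.invSelf x
  let B := Algebra.adjoin T {y}
  have hy : Ideal.span {⟨y, Algebra.self_mem_adjoin_singleton T y⟩} ≠ (⊤ : Ideal B) :=
    fun h => hx (hT x (IsLocalization.Away.isIntegral_of_span_invSelf_eq_top h))
  obtain ⟨m, hm, hym⟩ := Ideal.exists_le_maximal _ hy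
  obtain ⟨Q, hQ, hQm⟩ :=
    Ideal.exists_isPrime_comap_le_of_injective (f := B.val.toRingHom) Subtype.val_injective m
  let P := Q.under A
  let K := FractionRing (A ⧸ P)
  obtain ⟨ψ, hψker, hψ⟩ :=
    IsLocalization.exists_lift_fractionRing_quotient_under (Submonoid.powers x) Q
  obtain ⟨V, hBV, hmV⟩ := exists_valuationSubring_range_le_image_subset_nonunits
    (ψ.comp B.val.toRingHom) hm.ne_top (by rw [← RingHom.comap_ker, hψker]; exact hQm)
  have hψy : ψ y * algebraMap A K x = 1 := by
    rw [← hψ, RingHom.comp_apply, ← map_mul, mul_comm, IsLocalization.Away.mul_invSelf, map_one]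
  have hTB : ∀ t ∈ T, algebraMap A Aₓ t ∈ B := fun t ht =>
    IsScalarTower.algebraMap_apply T A Aₓ ⟨t, ht⟩ ▸ Subalgebra.algebraMap_mem B ⟨t, ht⟩
  refine ⟨⟨K, algebraMap A K, V⟩, ⟨_, (ker_algebraMap_fractionRing_quotient _).symm, hQ.under A⟩,
    IsFractionRing.exists_mul_algebraMap_eq_of_surjective (Ideal.Quotient.mk_surjective (I := P)),
    fun t ht => hBV ⟨⟨_, hTB t ht⟩, (RingHom.comp_apply _ _ _).trans (RingHom.congr_fun hψ t)⟩,
    fun hxV => ?_⟩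
  have hψy_nonunit : ψ y ∈ V.nonunits := hmV ⟨_, hym (Ideal.mem_span_singleton_self _), rfl⟩
  rw [eq_inv_of_mul_eq_one_left hψy, V.inv_mem_nonunits_iff] at hψy_nonunit
  exact hψy_nonunit.resolve_left (right_ne_zero_of_mul_eq_one hψy) hxV
end
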